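/- arXiv:1702.01271 — 2 statements merged into one kernel-verified Lean document; each statement's English description precedes it below -/
import Mathlib

section
/- Let q₁ < q₂ < ⋯ < q_n be primes and α₁,…,α_n positive reals with ∑_{i=1}^n q_i^{α_i}(1 - 1/q_i) ≤ 2g+1. Then q₁^{α₁}⋯q_n^{α_n} ≤ ((2g+1)/n)^n / ∏_{i=1}^n (1 - 1/q_i). -/
/-! AM–GM applied to the `n` positive numbers `q_i ^ α_i * (1 - 1 / q_i)`, whose sum is at most
`2g + 1`, bounds their product by `((2g + 1) / n) ^ n`; that product splits as
`∏ q_i ^ α_i` times `∏ (1 - 1 / q_i)`. -/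

open Real Finset

theorem Real.prod_le_sum_div_card_pow {ι : Type*} (s : Finset ι) {z : ι → ℝ}
    (hz : ∀ i ∈ s, 0 ≤ z i) :
    ∏ i ∈ s, z i ≤ ((∑ i ∈ s, z i) / #s) ^ #s := by
  rcases s.eq_empty_or_nonempty with rfl | hs
  · simp
  have hcard : (0 : ℝ) < #s := by exact_mod_cast hs.card_pos
  have hamgm := Real.geom_mean_le_arith_mean s (fun _ => 1) z (fun _ _ => zero_le_one)
    (by simpa using hcard) hz
  simp only [rpow_one, one_mul, sum_const, nsmul_eq_mul, mul_one] at hamgm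
  calc ∏ i ∈ s, z i = ((∏ i ∈ s, z i) ^ (#s : ℝ)⁻¹) ^ #s :=
        (rpow_inv_natCast_pow (prod_nonneg hz) hs.card_pos.ne').symm
    _ ≤ ((∑ i ∈ s, z i) / #s) ^ #s := by gcongr; exact rpow_nonneg (prod_nonneg hz) _

theorem Nat.Prime.one_sub_inv_pos {p : ℕ} (hp : p.Prime) : 0 < 1 - 1 / (p : ℝ) := by
  have hp1 : (1 : ℝ) < p := by exact_mod_cast hp.one_lt
  rw [sub_pos, div_lt_one (zero_lt_one.trans hp1)]
  exact hp1

theorem stmt4_general (g : ℕ) (n : ℕ)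
    (q : Fin n → ℕ) (hq : ∀ i, (q i).Prime)
    (α : Fin n → ℝ)
    (hconstr : ∑ i, (q i : ℝ) ^ (α i) * (1 - 1 / (q i : ℝ)) ≤ 2 * g + 1) :
    ∏ i, (q i : ℝ) ^ (α i) ≤
      ((2 * g + 1) / n) ^ (n : ℝ) / ∏ i, (1 - 1 / (q i : ℝ)) := by
  have hfactor i : 0 < 1 - 1 / (q i : ℝ) := (hq i).one_sub_inv_pos
  have hterm i : 0 ≤ (q i : ℝ) ^ (α i) * (1 - 1 / (q i : ℝ)) :=
    mul_nonneg (rpow_nonneg (Nat.cast_nonneg _) _) (hfactor i).le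
  rw [le_div_iff₀ (prod_pos fun i _ => hfactor i), ← prod_mul_distrib, rpow_natCast]
  calc ∏ i, (q i : ℝ) ^ (α i) * (1 - 1 / (q i : ℝ))
      ≤ ((∑ i, (q i : ℝ) ^ (α i) * (1 - 1 / (q i : ℝ))) / n) ^ n := by
        simpa using Real.prod_le_sum_div_card_pow univ fun i _ => hterm i
    _ ≤ ((2 * g + 1) / n) ^ n := by
        gcongr
        exact div_nonneg (sum_nonneg fun i _ => hterm i) n.cast_nonneg

theorem stmt4 (g : ℕ) (hg : 1 ≤ g) (n : ℕ) (hn : 1 ≤ n)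
    (q : Fin n → ℕ) (hq : ∀ i, (q i).Prime) (hmono : StrictMono q)
    (α : Fin n → ℝ) (hα : ∀ i, 0 < α i)
    (hconstr : ∑ i, (q i : ℝ) ^ (α i) * (1 - 1 / (q i : ℝ)) ≤ 2 * g + 1) :
    ∏ i, (q i : ℝ) ^ (α i) ≤
      ((2 * g + 1) / n) ^ (n : ℝ) / ∏ i, (1 - 1 / (q i : ℝ)) :=
  stmt4_general g n q hq α hconstr
end

section
/- Assume Bürgisser's criterion as a hypothesis. Then for every g ≥ 1, every positive integer m that occurs as the order of an element of Sp(2g,ℤ) satisfies m ≤ 3e^{3g}. In particular, the set S(g) of such orders is a bounded subset of ℝ. -/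
open Matrix

/-- The standard symplectic form `J = [[0, I_g],[-I_g, 0]]`. -/
def sympJ (g : ℕ) : Matrix (Fin g ⊕ Fin g) (Fin g ⊕ Fin g) ℤ :=
  Matrix.fromBlocks 0 1 (-1) 0

/-- The integral symplectic group `Sp(2g, ℤ)` as a set of `2g × 2g` integer matrices. -/
def Sp (g : ℕ) : Set (Matrix (Fin g ⊕ Fin g) (Fin g ⊕ Fin g) ℤ) :=
  {A | Aᵀ * sympJ g * A = sympJ g}

/-- `S(g)`: the set of positive integers occurring as the order of a nonidentity
element of `Sp(2g, ℤ)`. -/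
def SOrd (g : ℕ) : Set ℕ :=
  {m | ∃ A : Matrix (Fin g ⊕ Fin g) (Fin g ⊕ Fin g) ℤ, A ∈ Sp g ∧ A ≠ 1 ∧ orderOf A = m}

/-- Bürgisser's criterion: `m > 1` occurs as an element order in `Sp(2g, ℤ)` iff
`∑_{i=2}^k φ(p_i^{α_i}) ≤ 2g` when `m ≡ 2 (mod 4)` (the sum omitting the smallest
prime `p₁ = 2`), and `∑_{i=1}^k φ(p_i^{α_i}) ≤ 2g` otherwise. -/
def BurgisserCriterion (g : ℕ) : Prop :=
  ∀ m : ℕ, 1 < m →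
    (m ∈ SOrd g ↔
      if m % 4 = 2 then
        ∑ p ∈ m.primeFactors.erase 2, Nat.totient (p ^ m.factorization p) ≤ 2 * g
      else
        ∑ p ∈ m.primeFactors, Nat.totient (p ^ m.factorization p) ≤ 2 * g)

/-!
Write `m = ∏ p ^ αₚ`. For a prime power, `p ^ α ≤ 2 φ(p ^ α) ≤ exp φ(p ^ α)`, so the product of
the prime powers entering Bürgisser's sum is at most `exp (2g)`. The only prime power it can omit
is the factor `2` of an `m ≡ 2 (mod 4)`, hence `m ≤ 2 exp (2g) ≤ 3 exp (3g)`.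
-/

open Real Finset

lemma two_mul_le_exp {x : ℝ} (hx : 1 ≤ x) : 2 * x ≤ exp x := by
  have hsplit : exp x = exp 1 * exp (x - 1) := by rw [← exp_add]; ring_nf
  nlinarith [add_one_le_exp (x - 1), exp_one_gt_d9, exp_pos (x - 1)]

lemma Nat.Prime.pow_le_two_mul_totient {p : ℕ} (hp : p.Prime) (k : ℕ) :
    p ^ k ≤ 2 * (p ^ k).totient := by
  cases k with
  | zero => simp
  | succ k =>
    rw [Nat.totient_prime_pow_succ hp, pow_succ, mul_left_comm]
    exact Nat.mul_le_mul_left _ (by have := hp.two_le; omega)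

lemma Nat.Prime.pow_le_exp_totient {p : ℕ} (hp : p.Prime) (k : ℕ) :
    ((p ^ k : ℕ) : ℝ) ≤ exp (p ^ k).totient := by
  have htot : 1 ≤ (p ^ k).totient := Nat.totient_pos.2 (pow_pos hp.pos k)
  calc ((p ^ k : ℕ) : ℝ) ≤ 2 * ((p ^ k).totient : ℝ) := by
        exact_mod_cast hp.pow_le_two_mul_totient k
    _ ≤ exp (p ^ k).totient := two_mul_le_exp (by exact_mod_cast htot)

lemma prod_prime_pow_le_exp_sum_totient {s : Finset ℕ} (hs : ∀ p ∈ s, p.Prime) (e : ℕ → ℕ) :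
    ((∏ p ∈ s, p ^ e p : ℕ) : ℝ) ≤ exp (∑ p ∈ s, (p ^ e p).totient : ℕ) := by
  push_cast
  rw [exp_sum]
  exact prod_le_prod (fun _ _ ↦ by positivity)
    fun p hp ↦ mod_cast (hs p hp).pow_le_exp_totient (e p)

lemma Nat.factorization_two_eq_one_of_mod_four_eq_two {m : ℕ} (h : m % 4 = 2) :
    m.factorization 2 = 1 := by
  obtain ⟨k, rfl⟩ : ∃ k, m = 2 * (2 * k + 1) := ⟨m / 4, by omega⟩
  rw [Nat.factorization_mul two_ne_zero (by omega)]
  simp [Nat.prime_two.factorization_self, Nat.factorization_eq_zero_of_not_dvd]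

lemma Nat.two_mul_prod_erase_two_of_mod_four_eq_two {m : ℕ} (h : m % 4 = 2) :
    2 * ∏ p ∈ m.primeFactors.erase 2, p ^ m.factorization p = m := by
  have hm : m ≠ 0 := by omega
  have h2 : 2 ∈ m.primeFactors := Nat.mem_primeFactors.2 ⟨Nat.prime_two, by omega, hm⟩
  conv_lhs => enter [1]; rw [← pow_one 2, ← Nat.factorization_two_eq_one_of_mod_four_eq_two h]
  rw [mul_prod_erase _ (fun p ↦ p ^ m.factorization p) h2]
  exact Nat.prod_factorization_pow_eq_self hm

lemma le_two_mul_exp_of_mem_SOrd {g m : ℕ} (hBur : BurgisserCriterion g) (hm1 : 1 < m)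
    (hm : m ∈ SOrd g) : (m : ℝ) ≤ 2 * exp (2 * g) := by
  have hcrit := (hBur m hm1).1 hm
  have hprime : ∀ p ∈ m.primeFactors, p.Prime := fun _ ↦ Nat.prime_of_mem_primeFactors
  split_ifs at hcrit with h4
  · have hprod : ((∏ p ∈ m.primeFactors.erase 2, p ^ m.factorization p : ℕ) : ℝ) ≤ exp (2 * g) :=
      (prod_prime_pow_le_exp_sum_totient (fun p hp ↦ hprime p (mem_of_mem_erase hp)) _).trans
        (exp_le_exp.2 (by exact_mod_cast hcrit))
    rw [← Nat.two_mul_prod_erase_two_of_mod_four_eq_two h4, Nat.cast_mul, Nat.cast_two]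
    linarith
  · have hprod : ((∏ p ∈ m.primeFactors, p ^ m.factorization p : ℕ) : ℝ) ≤ exp (2 * g) :=
      (prod_prime_pow_le_exp_sum_totient hprime _).trans (exp_le_exp.2 (by exact_mod_cast hcrit))
    have hfact : ∏ p ∈ m.primeFactors, p ^ m.factorization p = m :=
      Nat.prod_factorization_pow_eq_self (by omega)
    rw [hfact] at hprod
    linarith [exp_pos (2 * g : ℝ)]

theorem stmt9_general (g : ℕ) (hBur : BurgisserCriterion g) :
    (∀ m ∈ SOrd g, (m : ℝ) ≤ 3 * Real.exp (3 * g)) ∧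
    BddAbove ((fun m : ℕ => (m : ℝ)) '' SOrd g) := by
  have hexp : 2 * exp (2 * g) ≤ 3 * exp (3 * g) := by gcongr <;> norm_num
  have bound : ∀ m ∈ SOrd g, (m : ℝ) ≤ 3 * exp (3 * g) := by
    intro m hm
    rcases le_or_gt m 1 with hm1 | hm1
    · have h1 : (m : ℝ) ≤ 1 := by exact_mod_cast hm1
      linarith [one_le_exp (by positivity : (0 : ℝ) ≤ 3 * g)]
    · exact (le_two_mul_exp_of_mem_SOrd hBur hm1 hm).trans hexp
  exact ⟨bound, 3 * exp (3 * g), by rintro _ ⟨m, hm, rfl⟩; exact bound m hm⟩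

theorem stmt9 (g : ℕ) (hg : 1 ≤ g) (hBur : BurgisserCriterion g) :
    (∀ m ∈ SOrd g, (m : ℝ) ≤ 3 * Real.exp (3 * g)) ∧
    BddAbove ((fun m : ℕ => (m : ℝ)) '' SOrd g) :=
  stmt9_general g hBur
end
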